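/- Tail bound for the two-dimensional Gaussian-kernel truncation: for a Hermitian matrix H with eigenvalues E_n, a real a with a⁻ = min_n |a − E_n| > 0, and truncation parameters q_max, y_max > 0, the operator-norm truncation error of restricting the double integral (1/π)∫₀^∞∫_{-∞}^∞ e^{-y²/2} e^{iy(a-H)q} dy dq to [0, q_max] × [-y_max, y_max] is at most (1/a⁻)·erfc(a⁻ q_max/2) + (√2 q_max/√π)·erfc(y_max/√2). -/

import Mathlib

open MeasureTheory Complex

noncomputable section

abbrev Op (N : ℕ) := EuclideanSpace ℂ (Fin N) →L[ℂ] EuclideanSpace ℂ (Fin N)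

/-- The complementary error function `erfc x = (2/√π) ∫ₓ^∞ e^{-t²} dt`. -/
def erfc (x : ℝ) : ℝ := (2 / Real.sqrt Real.pi) * ∫ t in Set.Ioi x, Real.exp (-t ^ 2)

/-!
In the eigenbasis of `A` the kernel `e^{-y²/2} exp(iyq(a - A))` is the diagonal operator with
entries `e^{-y²/2} e^{iyq(a - E n)}`, all of modulus `e^{-y²/2}`, and a diagonal operator has norm
at most the largest modulus of its entries. The error splits into the `q`-tail `q > qmax` of the
full inner integral, whose entries are `√(2π) e^{-(q(a - E n))²/2} ≤ √(2π) e^{-(am q)²/2}`, and the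
integral over `0 < q ≤ qmax` of the `y`-tails `|y| > ymax`, each of norm at most
`∫_{|y| > ymax} e^{-y²/2}`. Both Gaussian tails are `erfc`s.
-/

theorem ContinuousLinearMap.exp_apply_of_apply_eq_smul {𝕂 X : Type*} [RCLike 𝕂]
    [NormedAddCommGroup X] [NormedSpace 𝕂 X] [CompleteSpace X] {T : X →L[𝕂] X} {μ : 𝕂} {w : X}
    (h : T w = μ • w) : NormedSpace.exp T w = NormedSpace.exp μ • w := by
  have hpow (k : ℕ) : (T ^ k) w = μ ^ k • w := by
    induction k with
    | zero => simp
    | succ k ih => rw [pow_succ', mul_apply_eq_comp, ih, map_smul, h, smul_smul, pow_succ]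
  refine ((NormedSpace.exp_series_hasSum_exp' (𝕂 := 𝕂) T).mapL
    (ContinuousLinearMap.apply 𝕂 X w)).unique ?_
  simp only [ContinuousLinearMap.apply_apply, smul_apply, hpow, smul_smul]
  simpa only [smul_eq_mul] using
    (NormedSpace.exp_series_hasSum_exp' (𝕂 := 𝕂) μ).smul_const w

namespace OrthonormalBasis

variable {𝕜 E ι : Type*} [RCLike 𝕜] [NormedAddCommGroup E] [InnerProductSpace 𝕜 E] [Fintype ι]
  (v : OrthonormalBasis ι 𝕜 E)

def diagonal : (ι → 𝕜) →L[𝕜] E →L[𝕜] E :=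
  ∑ n, (ContinuousLinearMap.proj n).smulRight ((innerSL 𝕜 (v n)).smulRight (v n))

theorem diagonal_apply (c : ι → 𝕜) (x : E) :
    v.diagonal c x = ∑ n, (c n * inner 𝕜 (v n) x) • v n := by
  simp [diagonal, mul_smul]

theorem diagonal_apply_self (c : ι → 𝕜) (m : ι) : v.diagonal c (v m) = c m • v m := by
  classical
  simp [diagonal_apply, orthonormal_iff_ite.mp v.orthonormal]

theorem repr_diagonal_apply (c : ι → 𝕜) (x : E) (m : ι) :
    v.repr (v.diagonal c x) m = c m * v.repr x m := by
  classical
  simp [diagonal_apply, Pi.single_apply, v.repr_apply_apply]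

theorem norm_diagonal_le (c : ι → 𝕜) : ‖v.diagonal c‖ ≤ ‖c‖ := by
  refine ContinuousLinearMap.opNorm_le_bound _ (norm_nonneg c) fun x => ?_
  rw [← v.repr.norm_map, ← v.repr.norm_map x, EuclideanSpace.norm_eq, EuclideanSpace.norm_eq,
    ← Real.sqrt_sq (norm_nonneg c), ← Real.sqrt_mul (sq_nonneg _), Finset.mul_sum]
  gcongr with m
  rw [repr_diagonal_apply, norm_mul, mul_pow]
  gcongr
  exact norm_le_pi_norm c m

theorem exp_eq_diagonal [CompleteSpace E] {T : E →L[𝕜] E} {μ : ι → 𝕜}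
    (hT : ∀ n, T (v n) = μ n • v n) :
    NormedSpace.exp T = v.diagonal fun n => NormedSpace.exp (μ n) :=
  ContinuousLinearMap.coe_injective <| v.toBasis.ext fun n => by
    simp [ContinuousLinearMap.exp_apply_of_apply_eq_smul (hT n), diagonal_apply_self]

end OrthonormalBasis

open Real Set

theorem integrable_exp_neg_sq_div_two : Integrable fun t : ℝ => rexp (-t ^ 2 / 2) := by
  refine (integrable_exp_neg_mul_sq one_half_pos).congr (.of_forall fun t => ?_)
  ring_nf

theorem norm_exp_neg_sq_div_two_smul_cexp (y t : ℝ) :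
    ‖rexp (-y ^ 2 / 2) • cexp (I * y * t)‖ = rexp (-y ^ 2 / 2) := by
  rw [norm_smul, show I * y * t = ((y * t : ℝ) : ℂ) * I by push_cast; ring,
    norm_exp_ofReal_mul_I, mul_one, Real.norm_of_nonneg (exp_pos _).le]

theorem integrable_exp_neg_sq_div_two_smul_cexp (t : ℝ) :
    Integrable fun y : ℝ => rexp (-y ^ 2 / 2) • cexp (I * y * t) :=
  integrable_exp_neg_sq_div_two.mono' (by fun_prop)
    (.of_forall fun y => (norm_exp_neg_sq_div_two_smul_cexp y t).le)

theorem integral_exp_neg_sq_div_two_smul_cexp (t : ℝ) :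
    ∫ y : ℝ, rexp (-y ^ 2 / 2) • cexp (I * y * t) =
      ((√(2 * π) * rexp (-t ^ 2 / 2) : ℝ) : ℂ) := by
  have h := fourierIntegral_gaussian (b := 1 / 2) (by norm_num) t
  have hsqrt : ((π : ℂ) / (1 / 2)) ^ (1 / 2 : ℂ) = ((√(2 * π) : ℝ) : ℂ) := by
    rw [sqrt_eq_rpow, ofReal_cpow (by positivity)]
    push_cast
    ring_nf
  rw [hsqrt] at h
  convert h using 1
  · congr 1 with y
    rw [real_smul, ofReal_exp, ← Complex.exp_add, ← Complex.exp_add]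
    push_cast
    ring_nf
  · push_cast
    ring_nf

theorem erfc_antitone : Antitone erfc := fun x y hxy => by
  refine mul_le_mul_of_nonneg_left (setIntegral_mono_set ?_
    (.of_forall fun t => (exp_pos _).le) (Ioi_subset_Ioi hxy).eventuallyLE) (by positivity)
  simpa using (integrable_exp_neg_mul_sq one_pos).integrableOn

theorem integral_Ioi_exp_neg_sq_div_two (x : ℝ) :
    ∫ t in Ioi x, rexp (-t ^ 2 / 2) = √(2 * π) / 2 * erfc (x / √2) := by
  have hsub :
      ∫ t in Ioi x, rexp (-t ^ 2 / 2) = √2 * ∫ s in Ioi (x / √2), rexp (-s ^ 2) := by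
    have h := integral_comp_mul_left_Ioi (fun s => rexp (-s ^ 2)) x
      (inv_pos.2 (sqrt_pos.2 two_pos))
    simp only [smul_eq_mul, inv_inv, inv_mul_eq_div] at h
    rw [← h]
    congr 1 with t
    rw [div_pow, sq_sqrt zero_le_two, neg_div]
  have : √π ≠ 0 := (sqrt_pos.2 pi_pos).ne'
  rw [hsub, erfc, sqrt_mul zero_le_two]
  field_simp

theorem integral_Ioi_exp_neg_mul_sq_div_two {k : ℝ} (hk : 0 < k) (x : ℝ) :
    ∫ t in Ioi x, rexp (-(k * t) ^ 2 / 2) = √(2 * π) / (2 * k) * erfc (k * x / √2) := by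
  rw [integral_comp_mul_left_Ioi (fun s => rexp (-s ^ 2 / 2)) x hk,
    integral_Ioi_exp_neg_sq_div_two, smul_eq_mul]
  field_simp

theorem integral_compl_Ioc_exp_neg_sq_div_two {r : ℝ} (hr : 0 ≤ r) :
    ∫ y in (Ioc (-r) r)ᶜ, rexp (-y ^ 2 / 2) = √(2 * π) * erfc (r / √2) := by
  have hcompl : (Ioc (-r) r)ᶜ = Iic (-r) ∪ Ioi r := by
    ext; simp [or_iff_not_imp_left]
  have hIic : ∫ y in Iic (-r), rexp (-y ^ 2 / 2) = ∫ y in Ioi r, rexp (-y ^ 2 / 2) := by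
    rw [← integral_comp_neg_Ioi]
    simp only [neg_sq]
  rw [hcompl, setIntegral_union (Iic_disjoint_Ioi (by linarith)) measurableSet_Ioi
    integrable_exp_neg_sq_div_two.integrableOn integrable_exp_neg_sq_div_two.integrableOn, hIic,
    integral_Ioi_exp_neg_sq_div_two]
  ring

theorem norm_integral_Ioi_sub_integral_Ioc_le {X : Type*} [NormedAddCommGroup X]
    [NormedSpace ℝ X] {F G : ℝ → X} {f : ℝ → ℝ} {T δ : ℝ} (hT : 0 ≤ T)
    (hF : IntegrableOn F (Ioi 0)) (hG : IntegrableOn G (Ioc 0 T)) (hf : IntegrableOn f (Ioi T))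
    (hFf : ∀ q ∈ Ioi T, ‖F q‖ ≤ f q) (hFG : ∀ q ∈ Ioc 0 T, ‖F q - G q‖ ≤ δ) :
    ‖(∫ q in Ioi 0, F q) - ∫ q in Ioc 0 T, G q‖ ≤ (∫ q in Ioi T, f q) + T * δ := by
  have hF₁ : IntegrableOn F (Ioc 0 T) := hF.mono_set Ioc_subset_Ioi_self
  have hF₂ : IntegrableOn F (Ioi T) := hF.mono_set (Ioi_subset_Ioi hT)
  have hsplit : ∫ q in Ioi 0, F q = (∫ q in Ioc 0 T, F q) + ∫ q in Ioi T, F q := by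
    rw [← setIntegral_union (Ioc_disjoint_Ioi le_rfl) measurableSet_Ioi hF₁ hF₂,
      Ioc_union_Ioi_eq_Ioi hT]
  calc ‖(∫ q in Ioi 0, F q) - ∫ q in Ioc 0 T, G q‖
      = ‖(∫ q in Ioi T, F q) + ∫ q in Ioc 0 T, (F q - G q)‖ := by
        rw [hsplit, integral_sub hF₁ hG]
        abel_nf
    _ ≤ ‖∫ q in Ioi T, F q‖ + ‖∫ q in Ioc 0 T, (F q - G q)‖ := norm_add_le _ _
    _ ≤ (∫ q in Ioi T, f q) + δ * T := by
        gcongr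
        · exact norm_integral_le_of_norm_le hf (ae_restrict_of_forall_mem measurableSet_Ioi hFf)
        · simpa [Real.volume_real_Ioc_of_le hT] using
            norm_setIntegral_le_of_norm_le_const (μ := volume) measure_Ioc_lt_top hFG
    _ = (∫ q in Ioi T, f q) + T * δ := by ring

section GaussianKernel

variable {V ι : Type*} [NormedAddCommGroup V] [InnerProductSpace ℂ V] [CompleteSpace V]
  [Fintype ι]

def gaussianKernel (B : V →L[ℂ] V) (q y : ℝ) : V →L[ℂ] V :=
  rexp (-y ^ 2 / 2) • NormedSpace.exp ((I * y * q) • B)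

variable {B : V →L[ℂ] V} {v : OrthonormalBasis ι ℂ V} {μ : ι → ℝ}

theorem gaussianKernel_eq_diagonal (hB : ∀ n, B (v n) = (μ n : ℂ) • v n) (q y : ℝ) :
    gaussianKernel B q y =
      v.diagonal fun n => rexp (-y ^ 2 / 2) • cexp (I * y * (q * μ n : ℝ)) := by
  have hB' : ∀ n, ((I * y * q) • B) (v n) = (I * y * q * μ n) • v n := fun n => by
    rw [smul_apply, hB, smul_smul]
  rw [gaussianKernel, v.exp_eq_diagonal hB', ← ContinuousLinearMap.map_smul_of_tower]
  congr 1 with n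
  rw [Pi.smul_apply, ← Complex.exp_eq_exp_ℂ]
  push_cast
  ring_nf

theorem norm_gaussianKernel_le (hB : ∀ n, B (v n) = (μ n : ℂ) • v n) (q y : ℝ) :
    ‖gaussianKernel B q y‖ ≤ rexp (-y ^ 2 / 2) := by
  rw [gaussianKernel_eq_diagonal hB]
  exact (v.norm_diagonal_le _).trans ((pi_norm_le_iff_of_nonneg (exp_pos _).le).2 fun n =>
    (norm_exp_neg_sq_div_two_smul_cexp _ _).le)

theorem continuous_gaussianKernel (hB : ∀ n, B (v n) = (μ n : ℂ) • v n) :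
    Continuous (Function.uncurry (gaussianKernel B)) := by
  have hK : Function.uncurry (gaussianKernel B) = fun p : ℝ × ℝ =>
      v.diagonal fun n => rexp (-p.2 ^ 2 / 2) • cexp (I * p.2 * (p.1 * μ n : ℝ)) :=
    funext fun p => gaussianKernel_eq_diagonal hB p.1 p.2
  rw [hK]
  exact v.diagonal.continuous.comp (continuous_pi fun n => by fun_prop)

theorem integrable_gaussianKernel (hB : ∀ n, B (v n) = (μ n : ℂ) • v n) {ν : Measure ℝ}
    (hν : Integrable (fun y => rexp (-y ^ 2 / 2)) ν) (q : ℝ) :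
    Integrable (gaussianKernel B q) ν :=
  hν.mono' ((continuous_gaussianKernel hB).uncurry_left q).aestronglyMeasurable
    (.of_forall (norm_gaussianKernel_le hB q))

theorem continuous_integral_gaussianKernel (hB : ∀ n, B (v n) = (μ n : ℂ) • v n)
    {ν : Measure ℝ} (hν : Integrable (fun y => rexp (-y ^ 2 / 2)) ν) :
    Continuous fun q => ∫ y, gaussianKernel B q y ∂ν :=
  continuous_of_dominated (fun q => (integrable_gaussianKernel hB hν q).aestronglyMeasurable)
    (fun q => .of_forall (norm_gaussianKernel_le hB q)) hν
    (.of_forall fun y => (continuous_gaussianKernel hB).uncurry_right y)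

theorem integral_gaussianKernel (hB : ∀ n, B (v n) = (μ n : ℂ) • v n) (q : ℝ) :
    ∫ y, gaussianKernel B q y =
      v.diagonal fun n => ((√(2 * π) * rexp (-(q * μ n) ^ 2 / 2) : ℝ) : ℂ) := by
  have hint (n : ι) := integrable_exp_neg_sq_div_two_smul_cexp (q * μ n)
  simp_rw [gaussianKernel_eq_diagonal hB,
    v.diagonal.integral_comp_comm (Integrable.of_eval hint)]
  congr 1 with n
  rw [eval_integral hint, integral_exp_neg_sq_div_two_smul_cexp]

theorem norm_integral_gaussianKernel_le (hB : ∀ n, B (v n) = (μ n : ℂ) • v n) {m : ℝ}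
    (hm : 0 ≤ m) (hμ : ∀ n, m ≤ |μ n|) (q : ℝ) :
    ‖∫ y, gaussianKernel B q y‖ ≤ √(2 * π) * rexp (-(m * q) ^ 2 / 2) := by
  rw [integral_gaussianKernel hB]
  refine (v.norm_diagonal_le _).trans
    ((pi_norm_le_iff_of_nonneg (by positivity)).2 fun n => ?_)
  rw [norm_real, norm_of_nonneg (by positivity)]
  have hsq : (m * q) ^ 2 ≤ (q * μ n) ^ 2 := by
    rw [mul_pow, mul_pow, mul_comm, ← sq_abs (μ n)]
    gcongr
    exact hμ n
  gcongr

theorem norm_integral_sub_setIntegral_gaussianKernel_le (hB : ∀ n, B (v n) = (μ n : ℂ) • v n)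
    {s : Set ℝ} (hs : MeasurableSet s) (q : ℝ) :
    ‖(∫ y, gaussianKernel B q y) - ∫ y in s, gaussianKernel B q y‖ ≤
      ∫ y in sᶜ, rexp (-y ^ 2 / 2) := by
  have hK := integrable_gaussianKernel hB integrable_exp_neg_sq_div_two q
  rw [← integral_add_compl hs hK, add_sub_cancel_left]
  exact norm_integral_le_of_norm_le integrable_exp_neg_sq_div_two.integrableOn
    (.of_forall (norm_gaussianKernel_le hB q))

theorem norm_integral_gaussianKernel_sub_truncated_le (hB : ∀ n, B (v n) = (μ n : ℂ) • v n)
    {m qmax ymax : ℝ} (hm : 0 < m) (hμ : ∀ n, m ≤ |μ n|) (hq : 0 ≤ qmax) (hy : 0 ≤ ymax) :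
    ‖(∫ q in Ioi 0, ∫ y, gaussianKernel B q y) -
        ∫ q in Ioc 0 qmax, ∫ y in Ioc (-ymax) ymax, gaussianKernel B q y‖ ≤
      π / m * erfc (m * qmax / √2) + qmax * (√(2 * π) * erfc (ymax / √2)) := by
  have hF := continuous_integral_gaussianKernel hB integrable_exp_neg_sq_div_two
  have hG := continuous_integral_gaussianKernel hB
    (integrable_exp_neg_sq_div_two.integrableOn (s := Ioc (-ymax) ymax))
  have hdom : Integrable fun q => √(2 * π) * rexp (-(m * q) ^ 2 / 2) :=
    (integrable_exp_neg_sq_div_two.comp_mul_left' hm.ne').const_mul _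
  have hbound := norm_integral_gaussianKernel_le hB hm.le hμ
  refine (norm_integral_Ioi_sub_integral_Ioc_le hq
    (hdom.mono' hF.aestronglyMeasurable (.of_forall hbound)).integrableOn hG.integrableOn_Ioc
    hdom.integrableOn (fun q _ => hbound q)
    fun q _ => norm_integral_sub_setIntegral_gaussianKernel_le hB measurableSet_Ioc q).trans_eq ?_
  rw [integral_const_mul, integral_Ioi_exp_neg_mul_sq_div_two hm,
    integral_compl_Ioc_exp_neg_sq_div_two hy, ← mul_assoc, mul_div_assoc',
    mul_self_sqrt (by positivity)]
  field_simp

end GaussianKernel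

theorem stmt19_general {N : ℕ} (A : Op N)
    (v : OrthonormalBasis (Fin N) ℂ (EuclideanSpace ℂ (Fin N))) (E : Fin N → ℝ)
    (hv : ∀ n, A (v n) = (E n : ℂ) • v n)
    (a am qmax ymax : ℝ) (ham : am = ⨅ n : Fin N, |a - E n|) (ham0 : 0 < am)
    (hq : 0 < qmax) (hy : 0 < ymax) :
    ‖((1 / Real.pi : ℝ) • ∫ q in Set.Ioi (0 : ℝ), ∫ y : ℝ,
          Real.exp (-y ^ 2 / 2) •
            NormedSpace.exp ((I * y * q) • ((a : ℂ) • (1 : Op N) - A))) -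
        (1 / Real.pi : ℝ) • ∫ q in Set.Ioc (0 : ℝ) qmax, ∫ y in Set.Ioc (-ymax) ymax,
          Real.exp (-y ^ 2 / 2) •
            NormedSpace.exp ((I * y * q) • ((a : ℂ) • (1 : Op N) - A))‖ ≤
      (1 / am) * erfc (am * qmax / 2) +
        (Real.sqrt 2 * qmax / Real.sqrt Real.pi) * erfc (ymax / Real.sqrt 2) := by
  have hB (n : Fin N) : ((a : ℂ) • (1 : Op N) - A) (v n) = ((a - E n : ℝ) : ℂ) • v n := by
    simp [hv, sub_smul]
  have ham_le (n : Fin N) : am ≤ |a - E n| := ham ▸ ciInf_le (Finite.bddBelow_range _) n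
  have htrunc := norm_integral_gaussianKernel_sub_truncated_le hB ham0 ham_le hq.le hy.le
  have herfc : erfc (am * qmax / √2) ≤ erfc (am * qmax / 2) :=
    erfc_antitone (div_le_div_of_nonneg_left (by positivity) (by positivity)
      (sqrt_le_iff.2 ⟨zero_le_two, by norm_num⟩))
  -- `rw [← smul_sub]` does not match the `ℝ`-action on `Op N` as it is elaborated here.
  have hsmul (X Y : Op N) : (1 / π : ℝ) • X - (1 / π : ℝ) • Y = (1 / π : ℝ) • (X - Y) :=
    (smul_sub _ _ _).symm
  rw [hsmul, norm_smul, norm_of_nonneg (by positivity)]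
  calc 1 / π * ‖_‖
      ≤ 1 / π * (π / am * erfc (am * qmax / √2) + qmax * (√(2 * π) * erfc (ymax / √2))) := by
        gcongr
        exact htrunc
    _ = 1 / am * erfc (am * qmax / √2) + √2 * qmax / √π * erfc (ymax / √2) := by
        rw [sqrt_mul zero_le_two]
        field_simp
        linear_combination am * qmax * √2 * erfc (ymax / √2) * mul_self_sqrt pi_pos.le
    _ ≤ _ := by gcongr

/-- Tail bound for truncating the two-dimensional Gaussian-kernel integral
representation of the resolvent to `[0, qmax] × [-ymax, ymax]`. -/
theorem stmt19 {N : ℕ} [NeZero N] (A : Op N)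
    (v : OrthonormalBasis (Fin N) ℂ (EuclideanSpace ℂ (Fin N))) (E : Fin N → ℝ)
    (hv : ∀ n, A (v n) = (E n : ℂ) • v n)
    (a am qmax ymax : ℝ) (ham : am = ⨅ n : Fin N, |a - E n|) (ham0 : 0 < am)
    (hq : 0 < qmax) (hy : 0 < ymax) :
    ‖((1 / Real.pi : ℝ) • ∫ q in Set.Ioi (0 : ℝ), ∫ y : ℝ,
          Real.exp (-y ^ 2 / 2) •
            NormedSpace.exp ((I * y * q) • ((a : ℂ) • (1 : Op N) - A))) -
        (1 / Real.pi : ℝ) • ∫ q in Set.Ioc (0 : ℝ) qmax, ∫ y in Set.Ioc (-ymax) ymax,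
          Real.exp (-y ^ 2 / 2) •
            NormedSpace.exp ((I * y * q) • ((a : ℂ) • (1 : Op N) - A))‖ ≤
      (1 / am) * erfc (am * qmax / 2) +
        (Real.sqrt 2 * qmax / Real.sqrt Real.pi) * erfc (ymax / Real.sqrt 2) :=
  stmt19_general A v E hv a am qmax ymax ham ham0 hq hy
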